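/- arXiv:2105.06416 — 3 statements merged into one kernel-verified Lean document; each statement's English description precedes it below -/
import Mathlib

section
/- Let ρ > 1 and μ > 0, and set a_k = (μ)_k / Γ(ρk + 1) for k ∈ ℕ, where (μ)_k = Γ(μ + k)/Γ(μ) is the Pochhammer symbol. Then limsup_{k → ∞} (k · log k) / log(1/a_k) = 1/(ρ − 1); in other words, the entire function G_ρ(z) = ∑_{k=0}^∞ a_k z^k has order of growth 1/(ρ − 1). -/
/-- The coefficients of the generalized Mittag-Leffler function:
`a_k = (μ)_k / Γ(ρ k + 1)` with `(μ)_k = Γ(μ + k)/Γ(μ)` the Pochhammer symbol. -/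
noncomputable def genMLCoeff (ρ μ : ℝ) (k : ℕ) : ℝ :=
  (Real.Gamma (μ + k) / Real.Gamma μ) / Real.Gamma (ρ * k + 1)

section GenMLAux
open Real Filter Nat Topology

-- factorial lower bound
lemma log_factorial_ge (n : ℕ) : (n : ℝ) * Real.log n - n ≤ Real.log (n ! : ℝ) := by
  have h : (n : ℝ) ^ n / n ! ≤ Real.exp n := by
    refine le_trans ?_ (Real.sum_le_exp_of_nonneg (by positivity) (n+1))
    have := Finset.single_le_sum (f := fun i => (n : ℝ) ^ i / i !)
      (fun i _ => by positivity) (Finset.mem_range.2 (Nat.lt_succ_self n))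
    simpa using this
  have hfac : (0:ℝ) < n ! := by positivity
  have h2 : (n : ℝ) ^ n ≤ Real.exp n * n ! := by
    rw [div_le_iff₀ hfac] at h; linarith [h]
  rcases Nat.eq_zero_or_pos n with rfl | hn
  · simp
  have hn' : (0:ℝ) < n := by exact_mod_cast hn
  have := Real.log_le_log (by positivity) h2
  rw [Real.log_mul (Real.exp_ne_zero _) (ne_of_gt hfac), Real.log_exp,
    Real.log_pow] at this
  linarith

lemma log_factorial_le (n : ℕ) : Real.log (n ! : ℝ) ≤ (n : ℝ) * Real.log n := by
  rcases Nat.eq_zero_or_pos n with rfl | hn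
  · simp
  have h : ((n ! : ℕ) : ℝ) ≤ ((n ^ n : ℕ) : ℝ) := by exact_mod_cast Nat.factorial_le_pow n
  have := Real.log_le_log (by positivity) h
  rw [Nat.cast_pow, Real.log_pow] at this
  exact this

lemma mul_log_mono {a b : ℝ} (ha : 1 ≤ a) (hab : a ≤ b) :
    a * Real.log a ≤ b * Real.log b :=
  mul_le_mul hab (Real.log_le_log (by linarith) hab) (Real.log_nonneg ha) (by linarith)

lemma log_Gamma_le {x : ℝ} (hx : 2 ≤ x) : Real.log (Real.Gamma x) ≤ x * Real.log x := by
  set M := ⌈x⌉₊ with hM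
  have hx0 : (0:ℝ) ≤ x := by linarith
  have hxM : x ≤ M := Nat.le_ceil x
  have hM2 : (2:ℝ) ≤ M := hx.trans hxM
  have hM2' : 2 ≤ M := by exact_mod_cast hM2
  have hmono := Real.Gamma_strictMonoOn_Ici.monotoneOn
  have h1 : Real.Gamma x ≤ Real.Gamma M :=
    hmono (Set.mem_Ici.2 hx) (Set.mem_Ici.2 hM2) hxM
  have hMc : ((M - 1 : ℕ) : ℝ) = (M : ℝ) - 1 := by
    rw [Nat.cast_sub (by omega)]; norm_num
  have h2 : Real.Gamma M = ((M-1)! : ℝ) := by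
    rw [← Real.Gamma_nat_eq_factorial (M-1), hMc]; ring_nf
  have h3 : Real.log (Real.Gamma x) ≤ Real.log (((M-1)! : ℝ)) := by
    rw [← h2]; exact Real.log_le_log (Real.Gamma_pos_of_pos (by linarith)) h1
  refine h3.trans ((log_factorial_le (M-1)).trans ?_)
  rw [hMc]
  have hM1x : (M:ℝ) - 1 ≤ x := by
    have := Nat.ceil_lt_add_one hx0
    linarith
  exact mul_log_mono (by push_cast [hMc] at *; linarith) hM1x

lemma log_Gamma_ge {x : ℝ} (hx : 3 ≤ x) :
    (x - 2) * Real.log (x - 2) - x ≤ Real.log (Real.Gamma x) := by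
  set m := ⌊x⌋₊ with hm
  have hmx : (m:ℝ) ≤ x := Nat.floor_le (by linarith)
  have hm3 : 3 ≤ m := by
    have : (3:ℕ) ≤ ⌊x⌋₊ := Nat.le_floor (by exact_mod_cast hx)
    exact this
  have hmono := Real.Gamma_strictMonoOn_Ici.monotoneOn
  have h1 : Real.Gamma m ≤ Real.Gamma x :=
    hmono (Set.mem_Ici.2 (by
        have : (3:ℝ) ≤ m := by exact_mod_cast hm3
        linarith))
      (Set.mem_Ici.2 (by linarith)) hmx
  have hmc : ((m - 1 : ℕ) : ℝ) = (m : ℝ) - 1 := by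
    rw [Nat.cast_sub (by omega)]; norm_num
  have h2 : Real.Gamma m = (((m-1)!) : ℝ) := by
    rw [← Real.Gamma_nat_eq_factorial (m-1), hmc]; ring_nf
  have h3 : Real.log (((m-1)!) : ℝ) ≤ Real.log (Real.Gamma x) := by
    rw [← h2]
    exact Real.log_le_log (Real.Gamma_pos_of_pos (by positivity)) h1
  refine le_trans ?_ ((log_factorial_ge (m-1)).trans h3)
  rw [hmc]
  have hxm : x - 1 < m := Nat.sub_one_lt_floor x
  have h4 : x - 2 ≤ (m:ℝ) - 1 := by linarith
  have h5 : (x-2) * Real.log (x-2) ≤ ((m:ℝ)-1) * Real.log ((m:ℝ)-1) :=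
    mul_log_mono (by linarith) h4
  linarith

lemma tendsto_log_ratio (c e : ℝ) (hc : 0 < c) :
    Tendsto (fun k : ℕ => Real.log (c * k + e) / Real.log k) atTop (𝓝 1) := by
  have h0 : Tendsto (fun k : ℕ => c + e / k) atTop (𝓝 c) := by
    have h := (tendsto_const_nhds (α := ℕ) (x := e)).div_atTop
      (tendsto_natCast_atTop_atTop (R := ℝ))
    simpa using (tendsto_const_nhds (α := ℕ) (x := c)).add h
  have hlog : Tendsto (fun k : ℕ => Real.log (c + e / k)) atTop (𝓝 (Real.log c)) :=
    ((Real.continuousAt_log (ne_of_gt hc)).tendsto.comp h0)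
  have hinv : Tendsto (fun k : ℕ => (Real.log k)⁻¹) atTop (𝓝 0) :=
    ((Real.tendsto_log_atTop.comp (tendsto_natCast_atTop_atTop (R := ℝ))).inv_tendsto_atTop)
  have key : Tendsto (fun k : ℕ => 1 + Real.log (c + e / k) * (Real.log k)⁻¹)
      atTop (𝓝 1) := by
    have := (tendsto_const_nhds (x := (1:ℝ))).add (hlog.mul hinv)
    simpa using this
  refine key.congr' ?_
  have h1 : ∀ᶠ k : ℕ in atTop, 0 < c + e / k := h0.eventually (eventually_gt_nhds hc)
  have h2 : ∀ᶠ k : ℕ in atTop, (2:ℕ) ≤ k := eventually_ge_atTop 2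
  filter_upwards [h1, h2] with k hk1 hk2
  have hk0 : (0:ℝ) < k := by exact_mod_cast Nat.lt_of_lt_of_le (by norm_num) hk2
  have hlogk : Real.log k ≠ 0 := by
    have : (1:ℝ) < k := by exact_mod_cast Nat.lt_of_lt_of_le (by norm_num) hk2
    exact ne_of_gt (Real.log_pos this)
  have hsplit : c * k + e = k * (c + e / k) := by field_simp
  rw [hsplit, Real.log_mul (ne_of_gt hk0) (ne_of_gt hk1)]
  field_simp

lemma tendsto_lin_ratio (c e : ℝ) :
    Tendsto (fun k : ℕ => (c * k + e) / ((k : ℝ) * Real.log k)) atTop (𝓝 0) := by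
  have h0 : Tendsto (fun k : ℕ => c + e / k) atTop (𝓝 c) := by
    have h := (tendsto_const_nhds (α := ℕ) (x := e)).div_atTop
      (tendsto_natCast_atTop_atTop (R := ℝ))
    simpa using (tendsto_const_nhds (α := ℕ) (x := c)).add h
  have hinv : Tendsto (fun k : ℕ => (Real.log k)⁻¹) atTop (𝓝 0) :=
    ((Real.tendsto_log_atTop.comp (tendsto_natCast_atTop_atTop (R := ℝ))).inv_tendsto_atTop)
  have key := h0.mul hinv
  rw [mul_zero] at key
  refine key.congr' ?_
  filter_upwards [eventually_ge_atTop 2] with k hk2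
  have hk0 : (0:ℝ) < k := by exact_mod_cast Nat.lt_of_lt_of_le (by norm_num) hk2
  have hlogk : Real.log k ≠ 0 := by
    have : (1:ℝ) < k := by exact_mod_cast Nat.lt_of_lt_of_le (by norm_num) hk2
    exact ne_of_gt (Real.log_pos this)
  field_simp


lemma tendsto_mul_log_ratio (c e : ℝ) (hc : 0 < c) :
    Tendsto (fun k : ℕ => ((c * k + e) * Real.log (c * k + e)) / ((k : ℝ) * Real.log k))
      atTop (𝓝 c) := by
  have h0 : Tendsto (fun k : ℕ => c + e / k) atTop (𝓝 c) := by
    have h := (tendsto_const_nhds (α := ℕ) (x := e)).div_atTop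
      (tendsto_natCast_atTop_atTop (R := ℝ))
    simpa using (tendsto_const_nhds (α := ℕ) (x := c)).add h
  have key := h0.mul (tendsto_log_ratio c e hc)
  rw [mul_one] at key
  refine key.congr' ?_
  filter_upwards [eventually_ge_atTop 2] with k hk2
  have hk0 : (0:ℝ) < k := by exact_mod_cast Nat.lt_of_lt_of_le (by norm_num) hk2
  have hlogk : Real.log k ≠ 0 := by
    have : (1:ℝ) < k := by exact_mod_cast Nat.lt_of_lt_of_le (by norm_num) hk2
    exact ne_of_gt (Real.log_pos this)
  field_simp


lemma tendsto_log_Gamma (c d : ℝ) (hc : 0 < c) :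
    Tendsto (fun k : ℕ => Real.log (Real.Gamma (c * k + d)) / ((k : ℝ) * Real.log k))
      atTop (𝓝 c) := by
  have hlo : Tendsto (fun k : ℕ =>
      ((c * k + (d-2)) * Real.log (c * k + (d-2))) / ((k:ℝ) * Real.log k)
        - (c * k + d) / ((k:ℝ) * Real.log k)) atTop (𝓝 c) := by
    have := (tendsto_mul_log_ratio c (d-2) hc).sub (tendsto_lin_ratio c d)
    simpa using this
  have hhi := tendsto_mul_log_ratio c d hc
  have hT : Tendsto (fun k : ℕ => c * k + d) atTop atTop :=
    tendsto_atTop_add_const_right _ d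
      ((tendsto_natCast_atTop_atTop (R := ℝ)).const_mul_atTop hc)
  have h3 : ∀ᶠ k : ℕ in atTop, 3 ≤ c * k + d := hT.eventually_ge_atTop 3
  have h2 : ∀ᶠ k : ℕ in atTop, (2:ℕ) ≤ k := eventually_ge_atTop 2
  refine tendsto_of_tendsto_of_tendsto_of_le_of_le' hlo hhi ?_ ?_
  · filter_upwards [h3, h2] with k hk3 hk2
    have hk1 : (1:ℝ) < k := by exact_mod_cast Nat.lt_of_lt_of_le (by norm_num) hk2
    have hpos : 0 < (k:ℝ) * Real.log k := mul_pos (by linarith) (Real.log_pos hk1)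
    have := log_Gamma_ge hk3
    rw [← sub_div]
    have heq : c * k + (d - 2) = (c * k + d) - 2 := by ring
    rw [heq]
    gcongr
  · filter_upwards [h3, h2] with k hk3 hk2
    have hk1 : (1:ℝ) < k := by exact_mod_cast Nat.lt_of_lt_of_le (by norm_num) hk2
    have hpos : 0 < (k:ℝ) * Real.log k := mul_pos (by linarith) (Real.log_pos hk1)
    have := log_Gamma_le (by linarith : (2:ℝ) ≤ c * k + d)
    gcongr

end GenMLAux

open Real Filter Nat Topology in
/-- For `ρ > 1` and `μ > 0`,
`limsup_{k → ∞} (k log k) / log(1 / a_k) = 1/(ρ - 1)`, i.e. the entire function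
`G_ρ(z) = ∑ a_k z^k` has order of growth `1/(ρ - 1)`. -/
theorem genML_order (ρ μ : ℝ) (hρ : 1 < ρ) (hμ : 0 < μ) :
    Filter.limsup
      (fun k : ℕ => (k * Real.log k) / Real.log (1 / genMLCoeff ρ μ k))
      Filter.atTop = 1 / (ρ - 1) := by
  set L : ℕ → ℝ := fun k =>
    Real.log (Real.Gamma μ) + Real.log (Real.Gamma (ρ * k + 1))
      - Real.log (Real.Gamma (μ + k)) with hL
  have hΓμ : 0 < Real.Gamma μ := Real.Gamma_pos_of_pos hμ
  have hstep1 : ∀ k : ℕ, Real.log (1 / genMLCoeff ρ μ k) = L k := by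
    intro k
    have hk0 : (0:ℝ) ≤ k := Nat.cast_nonneg k
    have h1 : 0 < Real.Gamma (μ + k) := Real.Gamma_pos_of_pos (by linarith)
    have h2 : 0 < Real.Gamma (ρ * k + 1) :=
      Real.Gamma_pos_of_pos (by nlinarith)
    have : (1 : ℝ) / genMLCoeff ρ μ k =
        (Real.Gamma μ * Real.Gamma (ρ * k + 1)) / Real.Gamma (μ + k) := by
      rw [genMLCoeff]; field_simp
    rw [this, Real.log_div (by positivity) (ne_of_gt h1),
      Real.log_mul (ne_of_gt hΓμ) (ne_of_gt h2), hL]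
  have hklogk : Tendsto (fun k : ℕ => (k:ℝ) * Real.log k) atTop atTop :=
    (tendsto_natCast_atTop_atTop (R := ℝ)).atTop_mul_atTop₀
      (Real.tendsto_log_atTop.comp (tendsto_natCast_atTop_atTop (R := ℝ)))
  have hsecond := tendsto_log_Gamma ρ 1 (by linarith)
  have hthird : Tendsto (fun k : ℕ =>
      Real.log (Real.Gamma (μ + k)) / ((k:ℝ) * Real.log k)) atTop (𝓝 1) := by
    have := tendsto_log_Gamma 1 μ one_pos
    refine this.congr fun k => ?_
    rw [show (1:ℝ) * k + μ = μ + k by ring]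
  have hfirst : Tendsto (fun k : ℕ =>
      Real.log (Real.Gamma μ) / ((k:ℝ) * Real.log k)) atTop (𝓝 0) :=
    tendsto_const_nhds.div_atTop hklogk
  have hstep2 : Tendsto (fun k : ℕ => L k / ((k:ℝ) * Real.log k)) atTop (𝓝 (ρ - 1)) := by
    have := (hfirst.add hsecond).sub hthird
    rw [zero_add] at this
    refine this.congr fun k => ?_
    rw [hL]
    rw [sub_div, _root_.add_div]
  have hne : ρ - 1 ≠ 0 := by linarith
  have hstep3 : Tendsto (fun k : ℕ => ((k:ℝ) * Real.log k) / L k) atTop (𝓝 (1 / (ρ - 1))) := by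
    have := hstep2.inv₀ hne
    rw [← one_div] at this
    refine this.congr fun k => ?_
    rw [inv_div]
  have hfinal : Tendsto (fun k : ℕ => ((k:ℝ) * Real.log k) / Real.log (1 / genMLCoeff ρ μ k))
      atTop (𝓝 (1 / (ρ - 1))) := by
    refine hstep3.congr fun k => ?_
    rw [hstep1 k]
  exact hfinal.limsup_eq
end

section
/- Let 1 < ρ < 2, μ > 0, λ > 0, and let f(x) = λ e^{−λx} (λx)^{μ−1} / Γ(μ) be the density of the Gamma distribution with shape μ and rate λ. Then for every t ≥ 0, ∫_0^∞ E_ρ(−x t^ρ) f(x) dx = ∑_{k=0}^∞ (μ)_k / Γ(ρk + 1) · (−t^ρ/λ)^k = G_ρ(−t^ρ/λ); in particular the series on the right converges and gives the expectation of E_ρ(−α t^ρ) when α is Gamma(μ,λ)-distributed. -/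
open MeasureTheory

/-- The Mittag-Leffler function `E_ρ(x) = ∑ x^k / Γ(ρ k + 1)`. -/
noncomputable def mittagLeffler (ρ x : ℝ) : ℝ :=
  ∑' k : ℕ, x ^ k / Real.Gamma (ρ * k + 1)

/-- The density of the Gamma distribution with shape `μ` and rate `λ`. -/
noncomputable def gammaDens (μ lam x : ℝ) : ℝ :=
  lam * Real.exp (-(lam * x)) * (lam * x) ^ (μ - 1) / Real.Gamma μ



/-- Gautschi-type lower bound from log-convexity of Γ. -/
lemma gamma_logconvex_bound {s y : ℝ} (hs0 : 0 < s) (hs1 : s < 1) (hy : 1 < y) :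
    (y + s - 1) ^ s * Real.Gamma y ≤ Real.Gamma (y + s) := by
  have hy0 : (0:ℝ) < y := by linarith
  have hys : (0:ℝ) < y + s := by linarith
  have hys1 : (0:ℝ) < y + s - 1 := by linarith
  have hmem1 : y + s - 1 ∈ Set.Ioi (0:ℝ) := hys1
  have hmem2 : y + s ∈ Set.Ioi (0:ℝ) := hys
  have h := Real.convexOn_log_Gamma.2 hmem1 hmem2 (le_of_lt hs0)
    (by linarith : (0:ℝ) ≤ 1 - s) (by ring)
  have hcomb : s • (y + s - 1) + (1 - s) • (y + s) = y := by
    simp only [smul_eq_mul]; ring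
  rw [hcomb] at h
  simp only [Function.comp_apply, smul_eq_mul] at h
  -- h : log Γ y ≤ s * log Γ (y+s-1) + (1-s) * log Γ (y+s)
  have hG1 : Real.Gamma (y + s) = (y + s - 1) * Real.Gamma (y + s - 1) := by
    have := Real.Gamma_add_one (ne_of_gt hys1)
    rw [show y + s - 1 + 1 = y + s by ring] at this
    exact this
  have hGpos : 0 < Real.Gamma (y + s - 1) := Real.Gamma_pos_of_pos hys1
  have hGypos : 0 < Real.Gamma y := Real.Gamma_pos_of_pos hy0
  have hGyspos : 0 < Real.Gamma (y + s) := Real.Gamma_pos_of_pos hys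
  have hlog1 : Real.log (Real.Gamma (y + s - 1))
      = Real.log (Real.Gamma (y + s)) - Real.log (y + s - 1) := by
    rw [hG1, Real.log_mul (ne_of_gt hys1) (ne_of_gt hGpos)]; ring
  rw [hlog1] at h
  -- now h : log Γ y ≤ s*(log Γ(y+s) - log (y+s-1)) + (1-s)*log Γ(y+s)
  have hfin : Real.log ((y + s - 1) ^ s * Real.Gamma y) ≤ Real.log (Real.Gamma (y + s)) := by
    rw [Real.log_mul (by positivity) (ne_of_gt hGypos), Real.log_rpow hys1]
    nlinarith [h]
  have := Real.exp_le_exp.mpr hfin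
  rwa [Real.exp_log (by positivity), Real.exp_log hGyspos] at this

lemma gamma_step {ρ : ℝ} (hρ₁ : 1 < ρ) (hρ₂ : ρ < 2) (k : ℕ) :
    (ρ * k + ρ) ^ (ρ - 1) * ((ρ * k + 1) * Real.Gamma (ρ * k + 1))
      ≤ Real.Gamma (ρ * (k + 1 : ℕ) + 1) := by
  have hk0 : (0:ℝ) ≤ (k:ℝ) := Nat.cast_nonneg k
  have h := gamma_logconvex_bound (s := ρ - 1) (y := ρ * k + 2)
    (by linarith) (by linarith) (by nlinarith)
  have h1 : ρ * k + 2 + (ρ - 1) - 1 = ρ * k + ρ := by ring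
  have h2 : ρ * k + 2 + (ρ - 1) = ρ * ((k : ℝ) + 1) + 1 := by ring
  rw [h1, h2] at h
  have h3 : Real.Gamma (ρ * k + 2) = (ρ * k + 1) * Real.Gamma (ρ * k + 1) := by
    have := Real.Gamma_add_one (s := ρ * k + 1) (by positivity)
    rw [show ρ * (k:ℝ) + 1 + 1 = ρ * k + 2 by ring] at this
    exact this
  rw [h3] at h
  push_cast
  exact h

lemma summable_aux {ρ μ : ℝ} (hρ₁ : 1 < ρ) (hρ₂ : ρ < 2) (hμ : 0 < μ) {R : ℝ} (hR : 0 ≤ R) :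
    Summable (fun k : ℕ => Real.Gamma (μ + k) / Real.Gamma (ρ * k + 1) * R ^ k) := by
  apply summable_of_ratio_norm_eventually_le (r := 1/2) (by norm_num)
  have h1 : ∀ᶠ k : ℕ in Filter.atTop, μ ≤ (k : ℝ) :=
    tendsto_natCast_atTop_atTop.eventually_ge_atTop μ
  have h2 : ∀ᶠ k : ℕ in Filter.atTop, 4 * R ≤ (k : ℝ) ^ (ρ - 1) :=
    ((tendsto_rpow_atTop (by linarith : (0:ℝ) < ρ - 1)).comp
      tendsto_natCast_atTop_atTop).eventually_ge_atTop (4 * R)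
  filter_upwards [h1, h2] with k hk1 hk2
  have hk0 : (0:ℝ) ≤ (k:ℝ) := Nat.cast_nonneg k
  have hμk : (0:ℝ) < μ + k := by positivity
  have hA : 0 < Real.Gamma (μ + k) := Real.Gamma_pos_of_pos hμk
  have hB : 0 < Real.Gamma (ρ * k + 1) := Real.Gamma_pos_of_pos (by positivity)
  have hB' : 0 < Real.Gamma (ρ * (k + 1 : ℕ) + 1) := by
    apply Real.Gamma_pos_of_pos; push_cast; nlinarith
  have hP : (0:ℝ) < (ρ * k + ρ) ^ (ρ - 1) := by positivity
  rw [Real.norm_of_nonneg (by positivity), Real.norm_of_nonneg (by positivity)]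
  have hGrec : Real.Gamma (μ + (k + 1 : ℕ)) = (μ + k) * Real.Gamma (μ + k) := by
    have := Real.Gamma_add_one (ne_of_gt hμk)
    rw [show μ + (k:ℝ) + 1 = μ + ((k:ℕ) + 1 : ℕ) by push_cast; ring] at this
    exact this
  have hkey : (μ + (k:ℝ)) * R ≤ 1/2 * ((ρ * k + ρ) ^ (ρ - 1) * (ρ * k + 1)) := by
    have e1 : μ + (k:ℝ) ≤ 2 * (ρ * k + 1) := by nlinarith
    have e2 : 4 * R ≤ (ρ * k + ρ) ^ (ρ - 1) := by
      refine hk2.trans (Real.rpow_le_rpow hk0 (by nlinarith) (by linarith))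
    nlinarith [mul_le_mul_of_nonneg_right e1 hR, mul_le_mul_of_nonneg_left e2
      (by positivity : (0:ℝ) ≤ ρ * k + 1)]
  have goal' : Real.Gamma (μ + (k + 1 : ℕ)) * R ^ (k + 1) * Real.Gamma (ρ * k + 1)
      ≤ 1/2 * (Real.Gamma (μ + k) * R ^ k) * Real.Gamma (ρ * (k + 1 : ℕ) + 1) :=
    calc Real.Gamma (μ + (k + 1 : ℕ)) * R ^ (k + 1) * Real.Gamma (ρ * k + 1)
        = ((μ + (k:ℝ)) * R) * (Real.Gamma (μ + k) * R ^ k * Real.Gamma (ρ * k + 1)) := by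
          rw [hGrec, pow_succ]; ring
      _ ≤ (1/2 * ((ρ * k + ρ) ^ (ρ - 1) * (ρ * k + 1)))
            * (Real.Gamma (μ + k) * R ^ k * Real.Gamma (ρ * k + 1)) :=
          mul_le_mul_of_nonneg_right hkey (by positivity)
      _ = 1/2 * (Real.Gamma (μ + k) * R ^ k)
            * ((ρ * k + ρ) ^ (ρ - 1) * ((ρ * k + 1) * Real.Gamma (ρ * k + 1))) := by ring
      _ ≤ 1/2 * (Real.Gamma (μ + k) * R ^ k) * Real.Gamma (ρ * (k + 1 : ℕ) + 1) :=
          mul_le_mul_of_nonneg_left (gamma_step hρ₁ hρ₂ k) (by positivity)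
  have lhs_eq : Real.Gamma (μ + (k + 1 : ℕ)) / Real.Gamma (ρ * (k + 1 : ℕ) + 1) * R ^ (k + 1)
      = (Real.Gamma (μ + (k + 1 : ℕ)) * R ^ (k + 1)) / Real.Gamma (ρ * (k + 1 : ℕ) + 1) := by
    ring
  have rhs_eq : 1/2 * (Real.Gamma (μ + k) / Real.Gamma (ρ * k + 1) * R ^ k)
      = (1/2 * (Real.Gamma (μ + k) * R ^ k)) / Real.Gamma (ρ * k + 1) := by ring
  rw [lhs_eq, rhs_eq, div_le_div_iff₀ hB' hB]
  linarith [goal']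

lemma gammaDens_eqOn {μ lam : ℝ} (hμ : 0 < μ) (hlam : 0 < lam) (k : ℕ) :
    Set.EqOn (fun x : ℝ => x ^ k * gammaDens μ lam x)
      (fun x : ℝ => (lam ^ μ / Real.Gamma μ)
        * (x ^ (μ + (k:ℝ) - 1) * Real.exp (-(lam * x)))) (Set.Ioi 0) := by
  intro x hx
  have hx0 : (0:ℝ) < x := hx
  simp only [gammaDens]
  rw [Real.mul_rpow hlam.le hx0.le, ← Real.rpow_natCast x k,
    show μ + (k:ℝ) - 1 = (k:ℝ) + (μ - 1) by ring, Real.rpow_add hx0,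
    show (μ:ℝ) = 1 + (μ - 1) by ring, Real.rpow_add hlam, Real.rpow_one]
  ring

lemma gammaDens_moment {μ lam : ℝ} (hμ : 0 < μ) (hlam : 0 < lam) (k : ℕ) :
    ∫ x in Set.Ioi (0:ℝ), x ^ k * gammaDens μ lam x
      = Real.Gamma (μ + k) / (Real.Gamma μ * lam ^ k) := by
  rw [setIntegral_congr_fun measurableSet_Ioi (gammaDens_eqOn hμ hlam k),
    integral_const_mul]
  rw [show (fun x : ℝ => x ^ (μ + (k:ℝ) - 1) * Real.exp (-(lam * x)))
      = fun x : ℝ => x ^ ((μ + (k:ℝ)) - 1) * Real.exp (-(lam * x)) by norm_num]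
  rw [Real.integral_rpow_mul_exp_neg_mul_Ioi (by positivity) hlam]
  have hG : (0:ℝ) < Real.Gamma μ := Real.Gamma_pos_of_pos hμ
  have h1 : ((1:ℝ)/lam) ^ (μ + (k:ℝ)) = (lam ^ (μ + (k:ℝ)))⁻¹ := by
    rw [one_div, Real.inv_rpow hlam.le]
  rw [h1]
  have h2 : lam ^ μ * (lam ^ (μ + (k:ℝ)))⁻¹ = (lam ^ k : ℝ)⁻¹ := by
    rw [← Real.rpow_neg hlam.le, ← Real.rpow_add hlam, ← Real.rpow_natCast lam k,
      ← Real.rpow_neg hlam.le, show μ + -(μ + (k:ℝ)) = -(k:ℝ) by ring]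
  have hlk : (0:ℝ) < lam ^ k := by positivity
  rw [Real.rpow_add hlam, Real.rpow_natCast] at h2
  field_simp
  rw [Real.rpow_add hlam, Real.rpow_natCast]

lemma gammaDens_integrableOn {μ lam : ℝ} (hμ : 0 < μ) (hlam : 0 < lam) (k : ℕ) :
    IntegrableOn (fun x : ℝ => x ^ k * gammaDens μ lam x) (Set.Ioi 0) := by
  have h := integrableOn_rpow_mul_exp_neg_mul_rpow
    (s := μ + (k:ℝ) - 1) (p := 1) (by push_cast; linarith [Nat.cast_nonneg (α := ℝ) k])
    one_pos hlam
  simp only [Real.rpow_one] at h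
  have h2 : IntegrableOn (fun x : ℝ => (lam ^ μ / Real.Gamma μ)
      * (x ^ (μ + (k:ℝ) - 1) * Real.exp (-(lam * x)))) (Set.Ioi 0) := by
    have h3 : IntegrableOn (fun x : ℝ => x ^ (μ + (k:ℝ) - 1) * Real.exp (-lam * x))
        (Set.Ioi 0) := h
    have h4 : IntegrableOn (fun x : ℝ => (lam ^ μ / Real.Gamma μ)
        * (x ^ (μ + (k:ℝ) - 1) * Real.exp (-lam * x))) (Set.Ioi 0) :=
      h3.const_mul (lam ^ μ / Real.Gamma μ)
    refine IntegrableOn.congr_fun h4 (fun x _ => ?_) measurableSet_Ioi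
    simp [neg_mul]
  exact h2.congr_fun (gammaDens_eqOn hμ hlam k).symm measurableSet_Ioi


/-- For `1 < ρ < 2`, `μ > 0`, `λ > 0` and `t ≥ 0`, the expectation of `E_ρ(−α t^ρ)`
for `α ∼ Gamma(μ, λ)` equals `G_ρ(−t^ρ/λ) = ∑ (μ)_k / Γ(ρk+1) · (−t^ρ/λ)^k`,
and the series converges. -/
theorem gamma_expectation_mittagLeffler (ρ μ lam : ℝ)
    (hρ₁ : 1 < ρ) (hρ₂ : ρ < 2) (hμ : 0 < μ) (hlam : 0 < lam) :
    ∀ t : ℝ, 0 ≤ t →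
      Summable (fun k : ℕ =>
        (Real.Gamma (μ + k) / Real.Gamma μ) / Real.Gamma (ρ * k + 1)
          * (-(t ^ ρ) / lam) ^ k) ∧
      ∫ x in Set.Ioi (0 : ℝ), mittagLeffler ρ (-(x * t ^ ρ)) * gammaDens μ lam x
        = ∑' k : ℕ,
          (Real.Gamma (μ + k) / Real.Gamma μ) / Real.Gamma (ρ * k + 1)
            * (-(t ^ ρ) / lam) ^ k := by
  intro t ht
  set c : ℝ := t ^ ρ with hc
  have hc0 : 0 ≤ c := Real.rpow_nonneg ht ρ
  have hR : 0 ≤ c / lam := by positivity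
  have hGμ : (0:ℝ) < Real.Gamma μ := Real.Gamma_pos_of_pos hμ
  have hGρ : ∀ k : ℕ, (0:ℝ) < Real.Gamma (ρ * k + 1) := fun k =>
    Real.Gamma_pos_of_pos (by positivity)
  have hGμk : ∀ k : ℕ, (0:ℝ) < Real.Gamma (μ + k) := fun k =>
    Real.Gamma_pos_of_pos (by positivity)
  have hsum := summable_aux hρ₁ hρ₂ hμ hR
  constructor
  · apply Summable.of_abs
    have habs : (fun k : ℕ => |(Real.Gamma (μ + k) / Real.Gamma μ) / Real.Gamma (ρ * k + 1)
        * (-c / lam) ^ k|)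
        = fun k : ℕ => (Real.Gamma (μ + k) / Real.Gamma (ρ * k + 1) * (c / lam) ^ k)
            / Real.Gamma μ := by
      funext k
      rw [abs_mul, abs_pow, show -c / lam = -(c / lam) by ring, abs_neg, abs_of_nonneg hR,
        abs_of_nonneg (le_of_lt (div_pos (div_pos (hGμk k) hGμ) (hGρ k)))]
      ring
    rw [habs]
    exact hsum.div_const _
  · -- integral part
    set G : ℕ → ℝ → ℝ := fun k x =>
      ((-c) ^ k / Real.Gamma (ρ * k + 1)) * (x ^ k * gammaDens μ lam x) with hGdef
    have hgd_nonneg : ∀ x ∈ Set.Ioi (0:ℝ), 0 ≤ gammaDens μ lam x := by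
      intro x hx
      have hx0 : (0:ℝ) < x := hx
      unfold gammaDens
      positivity
    have hG_int : ∀ k, Integrable (G k) (volume.restrict (Set.Ioi 0)) := fun k =>
      (gammaDens_integrableOn hμ hlam k).const_mul _
    have hnorm : ∀ k : ℕ, ∫ x in Set.Ioi (0:ℝ), ‖G k x‖
        = (Real.Gamma (μ + k) / Real.Gamma (ρ * k + 1) * (c / lam) ^ k) / Real.Gamma μ := by
      intro k
      have heq : Set.EqOn (fun x => ‖G k x‖)
          (fun x => (c ^ k / Real.Gamma (ρ * k + 1)) * (x ^ k * gammaDens μ lam x))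
          (Set.Ioi 0) := by
        intro x hx
        have hx0 : (0:ℝ) < x := hx
        simp only [hGdef, Real.norm_eq_abs, abs_mul, abs_div, abs_pow, abs_neg,
          abs_of_nonneg hc0, abs_of_nonneg (hGρ k).le, abs_of_nonneg hx0.le,
          abs_of_nonneg (hgd_nonneg x hx)]
      rw [setIntegral_congr_fun measurableSet_Ioi heq, integral_const_mul,
        gammaDens_moment hμ hlam k, div_pow]
      field_simp
    have hsum_norm : Summable (fun k : ℕ => ∫ x in Set.Ioi (0:ℝ), ‖G k x‖) := by
      rw [funext hnorm]
      exact hsum.div_const _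
    have key := integral_tsum_of_summable_integral_norm hG_int hsum_norm
    have hpt : ∀ x : ℝ, mittagLeffler ρ (-(x * c)) * gammaDens μ lam x = ∑' k, G k x := by
      intro x
      unfold mittagLeffler
      rw [← tsum_mul_right]
      refine tsum_congr fun k => ?_
      simp only [hGdef]
      rw [show -(x * c) = x * (-c) by ring, mul_pow]
      ring
    calc ∫ x in Set.Ioi (0:ℝ), mittagLeffler ρ (-(x * c)) * gammaDens μ lam x
        = ∫ x in Set.Ioi (0:ℝ), ∑' k, G k x :=
          setIntegral_congr_fun measurableSet_Ioi (fun x _ => hpt x)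
      _ = ∑' k, ∫ x in Set.Ioi (0:ℝ), G k x := key.symm
      _ = ∑' k : ℕ, (Real.Gamma (μ + k) / Real.Gamma μ) / Real.Gamma (ρ * k + 1)
            * (-c / lam) ^ k := by
          refine tsum_congr fun k => ?_
          simp only [hGdef]
          rw [integral_const_mul, gammaDens_moment hμ hlam k, div_pow]
          field_simp
end

section
/- Let 1 < ρ < 2, μ > 0, λ > 0, T > 0, and let (α_k)_{k ≥ 1} be an i.i.d. sequence of random variables on a probability space (Ω̄, F̄, P̄), each with the Gamma distribution of shape μ and rate λ. Then, P̄-almost surely, sup_{t ∈ [0,T]} | (1/n) ∑_{k=1}^n E_ρ(−α_k t^ρ) − G_ρ(−t^ρ/λ) | → 0 as n → ∞. -/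
open MeasureTheory ProbabilityTheory

/-- The generalized Mittag-Leffler function
`G_ρ(x) = ∑ (μ)_k / Γ(ρk + 1) · x^k` with `(μ)_k = Γ(μ + k)/Γ(μ)`. -/
noncomputable def genML (ρ μ x : ℝ) : ℝ :=
  ∑' k : ℕ, (Real.Gamma (μ + k) / Real.Gamma μ) / Real.Gamma (ρ * k + 1) * x ^ k

/-- The Gamma distribution with shape `μ` and rate `λ`: the measure on `ℝ` with density
`f(x) = λ e^{−λx} (λx)^{μ−1} / Γ(μ)` on `(0, ∞)`. -/
noncomputable def gammaLaw (μ lam : ℝ) : Measure ℝ :=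
  (volume.restrict (Set.Ioi (0 : ℝ))).withDensity
    (fun x => ENNReal.ofReal (lam * Real.exp (-(lam * x)) * (lam * x) ^ (μ - 1)
      / Real.Gamma μ))

/-!
Expanding `E_ρ(−a s) = ∑ₖ (−s)ᵏ aᵏ / Γ(ρk+1)`, the empirical average at `s = t^ρ` is the
power series `∑ₖ (−s)ᵏ / Γ(ρk+1) · mₙ(k)` in the empirical moments `mₙ(k) = (1/n) ∑_{j<n} α_jᵏ`,
and `G_ρ(−s/λ)` is the same series with the Gamma moments `M(k) = Γ(μ+k) / (Γ(μ) λᵏ)`.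
Since `ρ > 1`, `∑ₖ Γ(μ+k) / Γ(ρk+1) · yᵏ` converges for every `y`, so `x ↦ E_ρ(R x)` is
integrable under the Gamma law. The strong law of large numbers then gives, almost surely,
`mₙ(k) → M(k)` for every `k` together with `∑ₖ cₖ mₙ(k) → ∑ₖ cₖ M(k)`, where
`cₖ = Rᵏ / Γ(ρk+1)` and `R = T^ρ`. By Scheffé's argument for series this forces
`∑ₖ cₖ |mₙ(k) − M(k)| → 0`, which bounds the error uniformly on `0 ≤ s ≤ R`.
-/
open Filter Function Topology Finset Real MeasureTheory ProbabilityTheory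

theorem Real.rpow_mul_Gamma_le_Gamma_add {y s : ℝ} (hy : 0 < y) (hs : 1 ≤ s) :
    y ^ s * Gamma y ≤ Gamma (y + s) := by
  rcases hs.eq_or_lt with rfl | hs
  · rw [rpow_one, Gamma_add_one hy.ne']
  have hΓy := Gamma_pos_of_pos hy
  -- convexity of `log ∘ Γ`: its slope on `[y + 1, y + s]` is at least `log y`, that on `[y, y + 1]`
  have hslope := convexOn_log_Gamma.slope_mono_adjacent (x := y) (y := y + 1) (z := y + s)
    hy (by simp only [Set.mem_Ioi]; linarith) (by linarith) (by linarith)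
  simp only [comp, Gamma_add_one hy.ne', add_sub_cancel_left, div_one,
    log_mul hy.ne' hΓy.ne', add_sub_add_left_eq_sub] at hslope
  rw [le_div_iff₀ (by linarith)] at hslope
  rw [← log_le_log_iff (by positivity) (Gamma_pos_of_pos (by linarith)), log_mul (by positivity)
    hΓy.ne', log_rpow hy]
  linear_combination hslope

theorem summable_Gamma_add_div_Gamma_mul_pow {ρ μ : ℝ} (hρ : 1 < ρ) (hμ : 0 < μ) (y : ℝ) :
    Summable fun k : ℕ => Gamma (μ + k) / Gamma (ρ * k + 1) * y ^ k := by
  have hratio : Tendsto (fun k : ℕ => (μ + 1) * |y| / (ρ * k + 1) ^ (ρ - 1)) atTop (𝓝 0) := by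
    refine tendsto_const_nhds.div_atTop ((tendsto_rpow_atTop (by linarith)).comp ?_)
    exact tendsto_atTop_add_const_right _ 1
      (tendsto_natCast_atTop_atTop.const_mul_atTop (by linarith))
  refine summable_of_ratio_norm_eventually_le (r := 1 / 2) (by norm_num) ?_
  filter_upwards [hratio.eventually_le_const (by norm_num : (0 : ℝ) < 1 / 2)] with k hk
  set q : ℝ := ρ * k + 1 with hq_def
  have hq : 0 < q := by positivity
  have hqp : q ^ ρ = q * q ^ (ρ - 1) := by
    rw [← rpow_one_add' hq.le (by linarith), add_sub_cancel]
  have hΓq := Gamma_pos_of_pos hq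
  have hΓμ := Gamma_pos_of_pos (by positivity : 0 < μ + k)
  have hgrowth : q ^ ρ * Gamma q ≤ Gamma (ρ * (k + 1) + 1) := by
    convert rpow_mul_Gamma_le_Gamma_add hq hρ.le using 2
    ring
  have hk' : (μ + k) * |y| / q ^ ρ ≤ 1 / 2 := by
    refine le_trans ?_ hk
    rw [hqp, ← div_div, div_le_div_iff_of_pos_right (by positivity), div_le_iff₀ hq]
    have hk0 : (0 : ℝ) ≤ k := k.cast_nonneg
    have : μ + k ≤ (μ + 1) * q := by
      rw [hq_def]; nlinarith [mul_nonneg (mul_nonneg hμ.le (by linarith : (0 : ℝ) ≤ ρ)) hk0]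
    nlinarith [abs_nonneg y]
  rw [Nat.cast_succ, ← add_assoc, Gamma_add_one (by positivity), norm_mul, norm_mul,
    norm_div, norm_div, norm_pow, norm_pow, norm_mul, Real.norm_of_nonneg hΓq.le,
    Real.norm_of_nonneg hΓμ.le, Real.norm_of_nonneg (by positivity : 0 ≤ μ + k),
    Real.norm_eq_abs, abs_of_pos (Gamma_pos_of_pos (by positivity)), pow_succ]
  calc (μ + k) * Gamma (μ + k) / Gamma (ρ * (k + 1) + 1) * (|y| ^ k * |y|)
      ≤ (μ + k) * Gamma (μ + k) / (q ^ ρ * Gamma q) * (|y| ^ k * |y|) := by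
        gcongr
    _ = (μ + k) * |y| / q ^ ρ * (Gamma (μ + k) / Gamma q * |y| ^ k) := by
        field_simp
    _ ≤ 1 / 2 * (Gamma (μ + k) / Gamma q * |y| ^ k) := by gcongr

theorem summable_pow_div_Gamma {ρ : ℝ} (hρ : 1 < ρ) (y : ℝ) :
    Summable fun k : ℕ => y ^ k / Gamma (ρ * k + 1) := by
  refine (summable_Gamma_add_div_Gamma_mul_pow hρ one_pos |y|).of_norm_bounded fun k => ?_
  have hΓ : 0 < Gamma (ρ * k + 1) := Gamma_pos_of_pos (by positivity)
  have hfact : 1 ≤ Gamma (1 + k) := by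
    rw [add_comm, Gamma_nat_eq_factorial]
    exact_mod_cast k.factorial_pos
  rw [norm_div, norm_pow, Real.norm_of_nonneg hΓ.le, Real.norm_eq_abs, div_mul_eq_mul_div]
  gcongr
  exact le_mul_of_one_le_left (by positivity) hfact

theorem measurable_mittagLeffler {ρ : ℝ} (hρ : 1 < ρ) : Measurable (mittagLeffler ρ) :=
  measurable_of_tendsto_metrizable (f := fun N x => ∑ k ∈ range N, x ^ k / Gamma (ρ * k + 1))
    (fun N => by fun_prop)
    (tendsto_pi_nhds.2 fun x => (summable_pow_div_Gamma hρ x).hasSum.tendsto_sum_nat)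

theorem hasSum_mittagLeffler_mul {ρ : ℝ} (hρ : 1 < ρ) (s x : ℝ) :
    HasSum (fun k : ℕ => s ^ k / Gamma (ρ * k + 1) * x ^ k) (mittagLeffler ρ (s * x)) := by
  unfold mittagLeffler
  convert (summable_pow_div_Gamma hρ (s * x)).hasSum using 2 with k
  ring

theorem hasSum_average_mittagLeffler {ρ : ℝ} (hρ : 1 < ρ) (a : ℕ → ℝ) (s : ℝ) (n : ℕ) :
    HasSum (fun k : ℕ => s ^ k / Gamma (ρ * k + 1) * ((∑ j ∈ range n, a j ^ k) / n))
      ((∑ j ∈ range n, mittagLeffler ρ (s * a j)) / n) := by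
  simpa only [mul_div_assoc', mul_sum] using
    (hasSum_sum fun j _ => hasSum_mittagLeffler_mul hρ s (a j)).div_const (n : ℝ)

namespace MeasureTheory

variable {α E : Type*} [MeasurableSpace α] {μ : Measure α} [NormedAddCommGroup E]
  [CompleteSpace E]

theorem integrable_tsum_of_summable_integral_norm {ι : Type*} [Countable ι] {F : ι → α → E}
    (hF_int : ∀ i, Integrable (F i) μ) (hF_sum : Summable fun i ↦ ∫ a, ‖F i a‖ ∂μ) :
    Integrable (fun a ↦ ∑' i, F i a) μ := by
  set G : ι → α →₁[μ] E := fun i => (hF_int i).toL1 (F i)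
  have hG : ∑' i, ‖G i‖ₑ ≠ ⊤ := by
    have : ∀ i, ‖G i‖ₑ = ENNReal.ofReal (∫ a, ‖F i a‖ ∂μ) := fun i => by
      rw [(hF_int i).enorm_toL1, ofReal_integral_norm_eq_lintegral_enorm (hF_int i)]
    rw [tsum_congr this, ← ENNReal.ofReal_tsum_of_nonneg
      (fun i => integral_nonneg fun a => norm_nonneg _) hF_sum]
    exact ENNReal.ofReal_ne_top
  refine (L1.integrable_coeFn (∑' i, G i)).congr ?_
  filter_upwards [Lp.coeFn_tsum hG, ae_all_iff.2 fun i => (hF_int i).coeFn_toL1] with a h1 h2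
  rw [h1]
  exact tsum_congr h2

end MeasureTheory

theorem ProbabilityTheory.strong_law_ae_comp {Ω β : Type*} [MeasurableSpace Ω]
    [MeasurableSpace β] {P : Measure Ω} {ν : Measure β} {X : ℕ → Ω → β} (hX : ∀ i, Measurable (X i))
    (hindep : Pairwise ((IndepFun · · P) on X)) (hdist : ∀ i, P.map (X i) = ν) {g : β → ℝ}
    (hg : Measurable g) (hgi : Integrable g ν) :
    ∀ᵐ ω ∂P, Tendsto (fun n : ℕ => (∑ i ∈ range n, g (X i ω)) / n) atTop
      (𝓝 (∫ x, g x ∂ν)) := by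
  have hident : ∀ i, IdentDistrib (X i) (X 0) P P := fun i =>
    ⟨(hX i).aemeasurable, (hX 0).aemeasurable, by rw [hdist, hdist]⟩
  rw [← hdist 0] at hgi ⊢
  rw [integral_map (hX 0).aemeasurable hg.aestronglyMeasurable]
  exact strong_law_ae_real (fun i => g ∘ X i) (hgi.comp_measurable (hX 0))
    (fun i j hij => (hindep hij).comp hg hg) (fun i => (hident i).comp hg)

theorem tendsto_tsum_abs_sub_of_tendsto_tsum {ι β : Type*} {l : Filter ι} {w : ι → β → ℝ}
    {v : β → ℝ} (hw0 : ∀ n k, 0 ≤ w n k) (hws : ∀ n, Summable (w n)) (hvs : Summable v)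
    (hlim : ∀ k, Tendsto (w · k) l (𝓝 (v k)))
    (htot : Tendsto (fun n => ∑' k, w n k) l (𝓝 (∑' k, v k))) :
    Tendsto (fun n => ∑' k, |w n k - v k|) l (𝓝 0) := by
  have hbound : ∀ n k, ‖max (v k - w n k) 0‖ ≤ |v k| := fun n k => by
    rw [Real.norm_of_nonneg (le_max_right _ _)]
    exact max_le (by linarith [le_abs_self (v k), hw0 n k]) (abs_nonneg _)
  -- the negative parts `(v - w n)⁺` are dominated by `|v|`, so Tannery's theorem applies to them
  have hneg : Tendsto (fun n => ∑' k, max (v k - w n k) 0) l (𝓝 0) := by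
    simpa using tendsto_tsum_of_dominated_convergence (g := fun _ => 0) hvs.abs
      (fun k => by simpa using ((hlim k).const_sub (v k)).max (tendsto_const_nhds (x := 0)))
      (Eventually.of_forall hbound)
  have hsplit : ∀ n, ∑' k, |w n k - v k|
      = (∑' k, w n k - ∑' k, v k) + 2 * ∑' k, max (v k - w n k) 0 := fun n => by
    have hs : Summable fun k => max (v k - w n k) 0 :=
      hvs.abs.of_norm_bounded (hbound n)
    rw [← (hws n).tsum_sub hvs, ← hs.tsum_mul_left, ← ((hws n).sub hvs).tsum_add (hs.mul_left 2)]
    refine tsum_congr fun k => ?_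
    rcases le_total (w n k) (v k) with h | h
    · rw [abs_of_nonpos (by linarith), max_eq_left (by linarith)]; ring
    · rw [abs_of_nonneg (by linarith), max_eq_right (by linarith)]; ring
  simp_rw [hsplit]
  simpa using (htot.sub_const (∑' k, v k)).add (hneg.const_mul 2)

theorem tendstoUniformlyOn_tsum_mul_of_abs_le {ι α β : Type*} {l : Filter ι} {S : Set α}
    {c : β → ℝ} {d : α → β → ℝ} {m : ι → β → ℝ} {M : β → ℝ}
    (hd : ∀ s ∈ S, ∀ k, |d s k| ≤ c k) (hm0 : ∀ n k, 0 ≤ m n k)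
    (hlim : ∀ k, Tendsto (m · k) l (𝓝 (M k))) (hs : ∀ n, Summable fun k => c k * m n k)
    (hS : Summable fun k => c k * M k)
    (htot : Tendsto (fun n => ∑' k, c k * m n k) l (𝓝 (∑' k, c k * M k))) :
    TendstoUniformlyOn (fun n s => ∑' k, d s k * m n k) (fun s => ∑' k, d s k * M k) l S := by
  rcases S.eq_empty_or_nonempty with rfl | ⟨s₀, hs₀⟩
  · exact tendstoUniformlyOn_empty
  have hc0 : ∀ k, 0 ≤ c k := fun k => (abs_nonneg _).trans (hd s₀ hs₀ k)
  have hscheffe := tendsto_tsum_abs_sub_of_tendsto_tsum (w := fun n k => c k * m n k)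
    (fun n k => mul_nonneg (hc0 k) (hm0 n k)) hs hS (fun k => (hlim k).const_mul (c k)) htot
  rw [Metric.tendstoUniformlyOn_iff]
  intro ε hε
  filter_upwards [hscheffe.eventually_lt_const hε] with n hn s hsS
  have hsm : Summable fun k => d s k * m n k := (hs n).of_norm_bounded fun k => by
    rw [norm_mul, Real.norm_of_nonneg (hm0 n k)]
    exact mul_le_mul_of_nonneg_right (hd s hsS k) (hm0 n k)
  have hsM : Summable fun k => d s k * M k := hS.abs.of_norm_bounded fun k => by
    rw [norm_mul, abs_mul, abs_of_nonneg (hc0 k)]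
    exact mul_le_mul_of_nonneg_right (hd s hsS k) (abs_nonneg _)
  calc dist (∑' k, d s k * M k) (∑' k, d s k * m n k)
      = ‖∑' k, d s k * (m n k - M k)‖ := by
        rw [dist_comm, dist_eq_norm, ← hsm.tsum_sub hsM]
        simp only [mul_sub]
    _ ≤ ∑' k, |c k * m n k - c k * M k| :=
        tsum_of_norm_bounded ((hs n).sub hS).abs.hasSum fun k => by
          rw [norm_mul, ← mul_sub, abs_mul, abs_of_nonneg (hc0 k)]
          exact mul_le_mul_of_nonneg_right (hd s hsS k) (abs_nonneg _)
    _ < ε := hn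

theorem tendstoUniformlyOn_average_mittagLeffler {ρ R : ℝ} (hρ : 1 < ρ) {a : ℕ → ℝ}
    (ha : ∀ j, 0 ≤ a j) {M : ℕ → ℝ}
    (hmom : ∀ k : ℕ, Tendsto (fun n : ℕ => (∑ j ∈ range n, a j ^ k) / n) atTop (𝓝 (M k)))
    (hM : Summable fun k : ℕ => R ^ k / Gamma (ρ * k + 1) * M k)
    (htot : Tendsto (fun n : ℕ => (∑ j ∈ range n, mittagLeffler ρ (R * a j)) / n) atTop
      (𝓝 (∑' k : ℕ, R ^ k / Gamma (ρ * k + 1) * M k))) :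
    TendstoUniformlyOn
      (fun (n : ℕ) (s : ℝ) => 1 / (n : ℝ) * ∑ j ∈ range n, mittagLeffler ρ (-(a j * s)))
      (fun s => ∑' k : ℕ, (-s) ^ k / Gamma (ρ * k + 1) * M k) atTop (Set.Icc 0 R) := by
  have hbound : ∀ s ∈ Set.Icc 0 R, ∀ k : ℕ,
      |(-s) ^ k / Gamma (ρ * k + 1)| ≤ R ^ k / Gamma (ρ * k + 1) := fun s hs k => by
    have := Gamma_pos_of_pos (by positivity : 0 < ρ * k + 1)
    rw [abs_div, abs_pow, abs_neg, abs_of_nonneg hs.1, abs_of_pos this]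
    gcongr
    exacts [hs.1, hs.2]
  refine (tendstoUniformlyOn_tsum_mul_of_abs_le hbound
    (fun n k => div_nonneg (sum_nonneg fun j _ => pow_nonneg (ha j) k) n.cast_nonneg) hmom
    (fun n => (hasSum_average_mittagLeffler hρ a R n).summable) hM
    (by simpa only [(hasSum_average_mittagLeffler hρ a R _).tsum_eq] using htot)).congr
    (Eventually.of_forall fun n s _ => ?_)
  dsimp only
  rw [(hasSum_average_mittagLeffler hρ a (-s) n).tsum_eq, one_div_mul_eq_div]
  simp only [neg_mul, mul_comm s]

theorem ae_pos_gammaLaw (μ lam : ℝ) : ∀ᵐ x ∂gammaLaw μ lam, 0 < x :=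
  (withDensity_absolutelyContinuous _ _).ae_le (ae_restrict_mem measurableSet_Ioi)

noncomputable def gammaMoment (μ lam : ℝ) (k : ℕ) : ℝ :=
  Real.Gamma (μ + k) / (Real.Gamma μ * lam ^ k)

theorem integral_pow_gammaLaw {μ lam : ℝ} (hμ : 0 < μ) (hlam : 0 < lam) (k : ℕ) :
    ∫ x, x ^ k ∂gammaLaw μ lam = gammaMoment μ lam k := by
  have hdensity : Set.EqOn
      (fun x => (ENNReal.ofReal (lam * exp (-(lam * x)) * (lam * x) ^ (μ - 1) / Gamma μ)).toReal
        • x ^ k)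
      (fun x => lam ^ μ / Gamma μ * (x ^ (μ + k - 1) * exp (-(lam * x)))) (Set.Ioi 0) := by
    intro x (hx : 0 < x)
    have hΓ := Gamma_pos_of_pos hμ
    dsimp only
    rw [ENNReal.toReal_ofReal (by positivity), smul_eq_mul, mul_rpow hlam.le hx.le,
      show μ + k - 1 = (μ - 1) + k by ring, rpow_add hx, rpow_natCast,
      show lam ^ μ = lam * lam ^ (μ - 1) by rw [← rpow_one_add' hlam.le (by linarith)]; ring_nf]
    ring
  rw [gammaLaw, integral_withDensity_eq_integral_toReal_smul (by fun_prop)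
      (ae_of_all _ fun _ => ENNReal.ofReal_lt_top),
    setIntegral_congr_fun measurableSet_Ioi hdensity, integral_const_mul,
    integral_rpow_mul_exp_neg_mul_Ioi (by positivity) hlam, one_div, inv_rpow hlam.le,
    rpow_add hlam, rpow_natCast, gammaMoment]
  have := Gamma_pos_of_pos hμ
  have := rpow_pos_of_pos hlam μ
  field_simp

theorem integrable_pow_gammaLaw {μ lam : ℝ} (hμ : 0 < μ) (hlam : 0 < lam) (k : ℕ) :
    Integrable (fun x => x ^ k) (gammaLaw μ lam) :=
  .of_integral_ne_zero <| by
    rw [integral_pow_gammaLaw hμ hlam, gammaMoment]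
    have := Gamma_pos_of_pos hμ
    have := Gamma_pos_of_pos (by positivity : 0 < μ + k)
    positivity

theorem summable_pow_div_Gamma_mul_gammaMoment {ρ μ : ℝ} (hρ : 1 < ρ) (hμ : 0 < μ)
    (lam R : ℝ) : Summable fun k : ℕ => R ^ k / Gamma (ρ * k + 1) * gammaMoment μ lam k := by
  refine ((summable_Gamma_add_div_Gamma_mul_pow hρ hμ (R / lam)).div_const (Gamma μ)).congr
    fun k => ?_
  rw [gammaMoment, div_pow]
  ring

theorem summable_integral_norm_mul_pow_gammaLaw {ρ μ lam : ℝ} (hρ : 1 < ρ) (hμ : 0 < μ)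
    (hlam : 0 < lam) (R : ℝ) :
    Summable fun k : ℕ => ∫ x, ‖R ^ k / Gamma (ρ * k + 1) * x ^ k‖ ∂gammaLaw μ lam := by
  refine (summable_pow_div_Gamma_mul_gammaMoment hρ hμ lam |R|).congr fun k => ?_
  have hΓ := Gamma_pos_of_pos (by positivity : 0 < ρ * k + 1)
  rw [← integral_pow_gammaLaw hμ hlam, ← integral_const_mul]
  refine integral_congr_ae ((ae_pos_gammaLaw μ lam).mono fun x hx => ?_)
  dsimp only
  rw [norm_mul, norm_div, norm_pow, norm_pow, Real.norm_of_nonneg hΓ.le, Real.norm_eq_abs,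
    Real.norm_of_nonneg hx.le]

theorem integrable_mittagLeffler_mul_gammaLaw {ρ μ lam : ℝ} (hρ : 1 < ρ) (hμ : 0 < μ)
    (hlam : 0 < lam) (R : ℝ) :
    Integrable (fun x => mittagLeffler ρ (R * x)) (gammaLaw μ lam) := by
  simp_rw [← (hasSum_mittagLeffler_mul hρ R _).tsum_eq]
  exact integrable_tsum_of_summable_integral_norm
    (fun k => (integrable_pow_gammaLaw hμ hlam k).const_mul _)
    (summable_integral_norm_mul_pow_gammaLaw hρ hμ hlam R)

theorem integral_mittagLeffler_mul_gammaLaw {ρ μ lam : ℝ} (hρ : 1 < ρ) (hμ : 0 < μ)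
    (hlam : 0 < lam) (R : ℝ) :
    ∫ x, mittagLeffler ρ (R * x) ∂gammaLaw μ lam
      = ∑' k : ℕ, R ^ k / Gamma (ρ * k + 1) * gammaMoment μ lam k := by
  simp_rw [← (hasSum_mittagLeffler_mul hρ R _).tsum_eq, ← integral_pow_gammaLaw hμ hlam,
    ← integral_const_mul]
  exact (integral_tsum_of_summable_integral_norm
    (fun k => (integrable_pow_gammaLaw hμ hlam k).const_mul _)
    (summable_integral_norm_mul_pow_gammaLaw hρ hμ hlam R)).symm

theorem genML_neg_div_eq_tsum (ρ μ lam s : ℝ) :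
    genML ρ μ (-(s / lam)) = ∑' k : ℕ, (-s) ^ k / Gamma (ρ * k + 1) * gammaMoment μ lam k := by
  refine tsum_congr fun k => ?_
  rw [gammaMoment, ← neg_div, div_pow]
  ring

theorem uniform_LLN_mittagLeffler_general (ρ μ lam T : ℝ)
    (hρ₁ : 1 < ρ) (hμ : 0 < μ) (hlam : 0 < lam)
    {Ω : Type*} [MeasurableSpace Ω] (P : Measure Ω)
    (α : ℕ → Ω → ℝ) (hmeas : ∀ k, Measurable (α k))
    (hindep : iIndepFun α P)
    (hdist : ∀ k, P.map (α k) = gammaLaw μ lam) :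
    ∀ᵐ ω ∂P, TendstoUniformlyOn
      (fun (n : ℕ) (t : ℝ) =>
        (1 / (n : ℝ)) * ∑ k ∈ Finset.range n, mittagLeffler ρ (-(α k ω * t ^ ρ)))
      (fun t => genML ρ μ (-(t ^ ρ / lam)))
      Filter.atTop (Set.Icc 0 T) := by
  have hpair : Pairwise ((IndepFun · · P) on α) := fun i j hij => hindep.indepFun hij
  have hmom : ∀ᵐ ω ∂P, ∀ k : ℕ, Tendsto (fun n : ℕ => (∑ j ∈ range n, α j ω ^ k) / n) atTop
      (𝓝 (gammaMoment μ lam k)) := ae_all_iff.2 fun k => by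
    simpa only [integral_pow_gammaLaw hμ hlam] using strong_law_ae_comp hmeas hpair hdist
      (g := fun x => x ^ k) (measurable_id.pow_const k) (integrable_pow_gammaLaw hμ hlam k)
  have htot : ∀ᵐ ω ∂P,
      Tendsto (fun n : ℕ => (∑ j ∈ range n, mittagLeffler ρ (T ^ ρ * α j ω)) / n) atTop
        (𝓝 (∑' k : ℕ, (T ^ ρ) ^ k / Gamma (ρ * k + 1) * gammaMoment μ lam k)) := by
    simpa only [integral_mittagLeffler_mul_gammaLaw hρ₁ hμ hlam] using strong_law_ae_comp hmeas
      hpair hdist (g := fun x => mittagLeffler ρ (T ^ ρ * x))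
      ((measurable_mittagLeffler hρ₁).comp (measurable_const_mul _))
      (integrable_mittagLeffler_mul_gammaLaw hρ₁ hμ hlam (T ^ ρ))
  have hpos : ∀ᵐ ω ∂P, ∀ j, 0 ≤ α j ω := ae_all_iff.2 fun j =>
    ae_of_ae_map (hmeas j).aemeasurable <| by
      simpa only [hdist j] using (ae_pos_gammaLaw μ lam).mono fun x hx => hx.le
  filter_upwards [hmom, htot, hpos] with ω hmom htot hpos
  have hunif := tendstoUniformlyOn_average_mittagLeffler hρ₁ hpos hmom
    (summable_pow_div_Gamma_mul_gammaMoment hρ₁ hμ lam _) htot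
  simp_rw [genML_neg_div_eq_tsum]
  exact (hunif.comp (· ^ ρ)).mono fun t ht =>
    ⟨rpow_nonneg ht.1 ρ, rpow_le_rpow ht.1 ht.2 (by linarith)⟩

/-- Uniform law of large numbers: if `(α_k)` is an i.i.d. `Gamma(μ, λ)` sequence, then,
almost surely, `(1/n) ∑_{k<n} E_ρ(−α_k t^ρ)` converges to `G_ρ(−t^ρ/λ)` uniformly on
`[0, T]`. -/
theorem uniform_LLN_mittagLeffler (ρ μ lam T : ℝ)
    (hρ₁ : 1 < ρ) (hρ₂ : ρ < 2) (hμ : 0 < μ) (hlam : 0 < lam) (hT : 0 < T)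
    {Ω : Type*} [MeasurableSpace Ω] (P : Measure Ω) [IsProbabilityMeasure P]
    (α : ℕ → Ω → ℝ) (hmeas : ∀ k, Measurable (α k))
    (hindep : iIndepFun α P)
    (hdist : ∀ k, P.map (α k) = gammaLaw μ lam) :
    ∀ᵐ ω ∂P, TendstoUniformlyOn
      (fun (n : ℕ) (t : ℝ) =>
        (1 / (n : ℝ)) * ∑ k ∈ Finset.range n, mittagLeffler ρ (-(α k ω * t ^ ρ)))
      (fun t => genML ρ μ (-(t ^ ρ / lam)))
      Filter.atTop (Set.Icc 0 T) :=
  uniform_LLN_mittagLeffler_general ρ μ lam T hρ₁ hμ hlam P α hmeas hindep hdist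
end
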